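/- There exists a simple graph G on the positive integers that is I_11-free and satisfies liminf_{n→∞} e(G_n)/n² ≥ 18033/79202, i.e., ≥ (1/4)(1 − 1/11) + 179/435611. -/

import Mathlib

open Filter

/-- `G` contains an increasing path of length `k`: vertices
`i₁ < i₂ < ⋯ < i_{k+1}` (all positive integers) with consecutive vertices adjacent. -/
def HasIncPath (G : SimpleGraph ℕ) (k : ℕ) : Prop :=
  ∃ f : Fin (k + 1) → ℕ, (∀ i, 1 ≤ f i) ∧ StrictMono f ∧
    ∀ i : Fin k, G.Adj (f i.castSucc) (f i.succ)

/-- `e(G_n)`: the number of edges of the subgraph of `G` induced by `{1, …, n}`. -/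
noncomputable def edgeCount (G : SimpleGraph ℕ) (n : ℕ) : ℕ :=
  {p : ℕ × ℕ | 1 ≤ p.1 ∧ p.1 < p.2 ∧ p.2 ≤ n ∧ G.Adj p.1 p.2}.ncard

/-!
Give every vertex a label in `{0, …, 10}` and join `x < y` exactly when the label increases:
labels strictly increase along an increasing path, so no such path has 11 edges.

The labelling is self-similar. The integers are cut into blocks `(b k, b (k + 1)]` with
`b k = β (k % 12) * 5 ^ (k / 12)`, and block `k` gets the label `w (k % 12)`, so scaling by `5`
shifts the blocks by one period. For `n` in a block `K + 12 σ`, counting only the edges between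
the blocks above `b (12 σ)` bounds `e(G_n)` from below by a quantity that is `5 ^ (2 σ)` times a
fixed number plus `5 ^ σ (n - b (K + 12 σ))` times another: linear in `n` on the block, while
`n²` is convex. So the density bound only has to be checked at the two ends of each of the
twelve blocks of one period, a finite computation.
-/

open Finset

section LabelGraph

def labelGraph (c : ℕ → ℕ) : SimpleGraph ℕ :=
  SimpleGraph.fromRel fun x y => x < y ∧ c x < c y

variable {c : ℕ → ℕ}

lemma labelGraph_adj_of_lt {x y : ℕ} (hxy : x < y) : (labelGraph c).Adj x y ↔ c x < c y := by
  simp [labelGraph, hxy.ne, hxy, hxy.not_gt]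

theorem not_hasIncPath_labelGraph {k : ℕ} (hc : ∀ x, c x < k) :
    ¬ HasIncPath (labelGraph c) k := by
  rintro ⟨f, -, hf, hadj⟩
  have hcf : StrictMono (c ∘ f) := Fin.strictMono_iff_lt_succ.2 fun i =>
    (labelGraph_adj_of_lt (hf i.castSucc_lt_succ)).1 (hadj i)
  have := Fintype.card_le_of_injective (fun i => (⟨c (f i), hc _⟩ : Fin k))
    fun i j h => hcf.injective (Fin.mk.inj h)
  simp at this

end LabelGraph

section EdgeCount

variable {G : SimpleGraph ℕ} {n : ℕ}

lemma setOf_edge_subset_Icc_prod :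
    {p : ℕ × ℕ | 1 ≤ p.1 ∧ p.1 < p.2 ∧ p.2 ≤ n ∧ G.Adj p.1 p.2} ⊆ ↑(Icc 1 n ×ˢ Icc 1 n) := by
  rintro p ⟨h₁, h₁₂, h₂, -⟩
  simp only [coe_product, coe_Icc, Set.mem_prod, Set.mem_Icc]
  omega

lemma card_le_edgeCount {s : Finset (ℕ × ℕ)}
    (hs : ∀ p ∈ s, 1 ≤ p.1 ∧ p.1 < p.2 ∧ p.2 ≤ n ∧ G.Adj p.1 p.2) : #s ≤ edgeCount G n := by
  rw [edgeCount, ← Set.ncard_coe_finset]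
  exact Set.ncard_le_ncard hs ((finite_toSet _).subset setOf_edge_subset_Icc_prod)

lemma edgeCount_le_sq : edgeCount G n ≤ n ^ 2 := by
  calc edgeCount G n ≤ (↑(Icc 1 n ×ˢ Icc 1 n) : Set (ℕ × ℕ)).ncard :=
        Set.ncard_le_ncard setOf_edge_subset_Icc_prod (finite_toSet _)
    _ = n ^ 2 := by
      rw [Set.ncard_coe_finset, card_product, Nat.card_Icc, add_tsub_cancel_right, sq]

lemma isCoboundedUnder_ge_edgeCount_div_sq :
    IsCoboundedUnder (· ≥ ·) atTop fun n : ℕ => (edgeCount G n : ℝ) / n ^ 2 := by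
  refine isBoundedUnder_of_eventually_le (a := 1) ?_ |>.isCoboundedUnder_ge
  filter_upwards [eventually_gt_atTop 0] with n hn
  rw [div_le_one (by positivity)]
  exact_mod_cast edgeCount_le_sq

end EdgeCount

section Blocks

variable (w len : ℕ → ℕ)

def lowerSum (l : ℕ) : ℕ := ∑ k ∈ (range l).filter (fun k => w k < w l), len k

def blockSum (K : ℕ) : ℕ := ∑ l ∈ range K, len l * lowerSum w len l

lemma blockSum_succ (K : ℕ) :
    blockSum w len (K + 1) = blockSum w len K + len K * lowerSum w len K :=
  sum_range_succ _ _

lemma lowerSum_mul_right (P l : ℕ) :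
    lowerSum w (fun k => len k * P) l = lowerSum w len l * P :=
  (sum_mul _ _ _).symm

lemma blockSum_mul_right (P K : ℕ) :
    blockSum w (fun k => len k * P) K = blockSum w len K * P ^ 2 := by
  simp only [blockSum, lowerSum_mul_right, sum_mul]
  exact sum_congr rfl fun _ _ => by ring

variable {w len} {len' : ℕ → ℕ}

lemma lowerSum_congr {l : ℕ} (h : ∀ k < l, len k = len' k) :
    lowerSum w len l = lowerSum w len' l :=
  sum_congr rfl fun k hk => h k (mem_range.1 (mem_filter.1 hk).1)

lemma blockSum_congr {K : ℕ} (h : ∀ k < K, len k = len' k) :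
    blockSum w len K = blockSum w len' K :=
  sum_congr rfl fun l hl => by
    have hl := mem_range.1 hl
    rw [h l hl, lowerSum_congr fun k hk => h k (hk.trans hl)]

lemma Monotone.eq_of_mem_Ioc_succ {a : ℕ → ℕ} (ha : Monotone a) {k k' x : ℕ}
    (hx : x ∈ Ioc (a k) (a (k + 1))) (hx' : x ∈ Ioc (a k') (a (k' + 1))) : k = k' := by
  rw [mem_Ioc] at hx hx'
  by_contra hne
  rcases Nat.lt_or_gt_of_ne hne with h | h
  · have := ha (show k + 1 ≤ k' from h); omega
  · have := ha (show k' + 1 ≤ k from h); omega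

theorem blockSum_le_edgeCount {c a : ℕ → ℕ} (ha : Monotone a) {K n : ℕ} (hK : a K ≤ n)
    (hc : ∀ k < K, ∀ x ∈ Ioc (a k) (a (k + 1)), c x = w k) :
    blockSum w (fun k => a (k + 1) - a k) K ≤ edgeCount (labelGraph c) n := by
  let I k := Ioc (a k) (a (k + 1))
  let S := (range K).sigma fun l =>
    ((range l).filter fun k => w k < w l).sigma fun k => I k ×ˢ I l
  have hS : #S = blockSum w (fun k => a (k + 1) - a k) K := by
    simp only [S, I, card_sigma, card_product, Nat.card_Ioc, blockSum, lowerSum, mul_sum]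
    exact sum_congr rfl fun _ _ => sum_congr rfl fun _ _ => mul_comm _ _
  have hinj : Set.InjOn (fun x : (_ : ℕ) × (_ : ℕ) × ℕ × ℕ => x.2.2) S := by
    rintro ⟨l, k, p⟩ hx ⟨l', k', p'⟩ hx' (rfl : p = p')
    simp only [S, coe_sigma, Set.mem_sigma_iff, coe_filter, mem_coe, mem_product] at hx hx'
    obtain rfl := ha.eq_of_mem_Ioc_succ hx.2.2.2 hx'.2.2.2
    obtain rfl := ha.eq_of_mem_Ioc_succ hx.2.2.1 hx'.2.2.1
    rfl
  rw [← hS, ← card_image_of_injOn hinj]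
  refine card_le_edgeCount fun p hp => ?_
  obtain ⟨⟨l, k, x, y⟩, hx, rfl⟩ := mem_image.1 hp
  dsimp only
  simp only [S, I, mem_sigma, mem_range, mem_filter, mem_product, mem_Ioc] at hx
  obtain ⟨hlK, ⟨hkl, hw⟩, ⟨hx₁, hx₂⟩, ⟨hy₁, hy₂⟩⟩ := hx
  have h₁ := ha (show k + 1 ≤ l from hkl)
  have h₂ := ha (show l + 1 ≤ K from hlK)
  refine ⟨by omega, by omega, by omega, (labelGraph_adj_of_lt (by omega)).2 ?_⟩
  rwa [hc k (hkl.trans hlK) x (mem_Ioc.2 ⟨hx₁, hx₂⟩), hc l hlK y (mem_Ioc.2 ⟨hy₁, hy₂⟩)]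

end Blocks

section SegIndex

variable {b : ℕ → ℕ}

def segIndex (b : ℕ → ℕ) (x : ℕ) : ℕ := Nat.findGreatest (fun k => b k < x) x

lemma segIndex_eq (hb : StrictMono b) {k x : ℕ} (h₁ : b k < x) (h₂ : x ≤ b (k + 1)) :
    segIndex b x = k :=
  Nat.findGreatest_eq_iff.2 ⟨(hb.id_le k).trans h₁.le, fun _ => h₁,
    fun _ hk _ => not_lt.2 (h₂.trans (hb.monotone hk))⟩

lemma le_segIndex_and_mem_Ioc (hb : StrictMono b) {m x : ℕ} (h : b m < x) :
    m ≤ segIndex b x ∧ b (segIndex b x) < x ∧ x ≤ b (segIndex b x + 1) := by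
  have hmx : m ≤ x := (hb.id_le m).trans h.le
  refine ⟨Nat.le_findGreatest hmx h, Nat.findGreatest_spec (P := fun k => b k < x) hmx h,
    not_lt.1 fun hlt => ?_⟩
  exact Nat.findGreatest_is_greatest (P := fun k => b k < x) (Nat.lt_succ_self _)
    ((hb.id_le _).trans hlt.le) hlt

end SegIndex

lemma mul_sq_le_of_endpoints {c A B m D s : ℝ} (hc : 0 ≤ c) (hs : 0 ≤ s) (hsD : s ≤ D)
    (h₀ : c * m ^ 2 ≤ A) (h₁ : c * (m + D) ^ 2 ≤ A + B * D) : c * (m + s) ^ 2 ≤ A + B * s := by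
  rcases hs.eq_or_lt with rfl | hs
  · simpa using h₀
  -- `s ↦ A + B * s - c * (m + s) ^ 2` is concave: interpolate between `0` and `D`
  have key : D * (A + B * s - c * (m + s) ^ 2) =
      (D - s) * (A - c * m ^ 2) + s * (A + B * D - c * (m + D) ^ 2) + c * s * (D - s) * D := by
    ring
  have : 0 ≤ D * (A + B * s - c * (m + s) ^ 2) := by
    rw [key]
    have := mul_nonneg (mul_nonneg (mul_nonneg hc hs.le) (sub_nonneg.2 hsD)) (hs.le.trans hsD)
    linarith [mul_nonneg (sub_nonneg.2 hsD) (sub_nonneg.2 h₀),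
      mul_nonneg hs.le (sub_nonneg.2 h₁)]
  linarith [(mul_nonneg_iff_of_pos_left (hs.trans_le hsD)).1 this]

namespace I11Construction

def pattern (k : ℕ) : ℕ := [10, 3, 9, 4, 5, 6, 7, 0, 8, 1, 9, 2].getD (k % 12) 0

def breakpoint (k : ℕ) : ℕ :=
  [20, 22, 26, 27, 31, 39, 47, 56, 62, 72, 80, 89].getD (k % 12) 0 * 5 ^ (k / 12)

def gap (k : ℕ) : ℕ := breakpoint (k + 1) - breakpoint k

def label (x : ℕ) : ℕ := pattern (segIndex breakpoint x)

lemma pattern_lt (k : ℕ) : pattern k < 11 := by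
  have hvals : ∀ r < 12, [10, 3, 9, 4, 5, 6, 7, 0, 8, 1, 9, 2].getD r 0 < 11 := by decide
  exact hvals _ (Nat.mod_lt _ (by norm_num))

lemma pattern_add_mul (k σ : ℕ) : pattern (k + 12 * σ) = pattern k := by
  rw [pattern, Nat.add_mul_mod_self_left, pattern]

lemma breakpoint_add_mul (k σ : ℕ) : breakpoint (k + 12 * σ) = breakpoint k * 5 ^ σ := by
  rw [breakpoint, Nat.add_mul_mod_self_left, Nat.add_mul_div_left _ _ (by norm_num), pow_add,
    ← mul_assoc, breakpoint]

lemma breakpoint_strictMono : StrictMono breakpoint := by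
  have base : ∀ r < 12, breakpoint r < breakpoint (r + 1) := by decide
  refine strictMono_nat_of_lt_succ fun k => ?_
  rw [← Nat.mod_add_div k 12, breakpoint_add_mul, add_right_comm, breakpoint_add_mul]
  exact Nat.mul_lt_mul_of_pos_right (base _ (Nat.mod_lt _ (by norm_num))) (by positivity)

lemma label_eq {k x : ℕ} (h₁ : breakpoint k < x) (h₂ : x ≤ breakpoint (k + 1)) :
    label x = pattern k := by
  rw [label, segIndex_eq breakpoint_strictMono h₁ h₂]

/- Three periods of blocks below the scale of `n` are needed: with `12 + j` or `24 + j`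
in place of `36 + j` some of these checks fail. -/
lemma density_at_block_start : ∀ j < 12,
    18033 * breakpoint (36 + j) ^ 2 ≤ 79202 * blockSum pattern gap (36 + j) := by
  decide

lemma density_at_block_end : ∀ j < 12,
    18033 * breakpoint (36 + j + 1) ^ 2 ≤
      79202 * (blockSum pattern gap (36 + j) + lowerSum pattern gap (36 + j) * gap (36 + j)) := by
  decide

lemma blockSum_add_mul_le_edgeCount (K σ n : ℕ) (h₁ : breakpoint (K + 12 * σ) ≤ n)
    (h₂ : n ≤ breakpoint (K + 1 + 12 * σ)) :
    blockSum pattern gap K * (5 ^ σ) ^ 2 +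
        (n - breakpoint (K + 12 * σ)) * (lowerSum pattern gap K * 5 ^ σ) ≤
      edgeCount (labelGraph label) n := by
  -- the blocks from `12 * σ` on, the last one truncated at `n`
  let a k := min (breakpoint (k + 12 * σ)) n
  have hmono := breakpoint_strictMono.monotone
  have ha : Monotone a := fun i j hij => min_le_min_right _ (hmono (by omega))
  have ha_eq : ∀ k ≤ K, a k = breakpoint (k + 12 * σ) := fun k hk =>
    min_eq_left ((hmono (by omega)).trans h₁)
  have hlen : ∀ k < K, a (k + 1) - a k = gap k * 5 ^ σ := fun k hk => by
    rw [ha_eq k hk.le, ha_eq (k + 1) hk, gap, Nat.sub_mul, ← breakpoint_add_mul,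
      ← breakpoint_add_mul]
  have hlast : a (K + 1) - a K = n - breakpoint (K + 12 * σ) := by
    rw [ha_eq K le_rfl, show a (K + 1) = n from min_eq_right h₂]
  have hlabel : ∀ k < K + 1, ∀ x ∈ Ioc (a k) (a (k + 1)), label x = pattern k := by
    intro k _ x hx
    obtain ⟨hx₁, hx₂⟩ := mem_Ioc.1 hx
    simp only [a, add_right_comm k 1] at hx₁ hx₂
    replace hx₁ : breakpoint (k + 12 * σ) < x := by omega
    replace hx₂ : x ≤ breakpoint (k + 12 * σ + 1) := by omega
    rw [label_eq hx₁ hx₂, pattern_add_mul]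
  have := blockSum_le_edgeCount ha (min_le_right _ _) hlabel
  rwa [blockSum_succ, blockSum_congr hlen, blockSum_mul_right, hlast,
    lowerSum_congr fun k hk => hlen k hk, lowerSum_mul_right] at this

lemma mul_sq_le_edgeCount_of_mem_Icc {j σ n : ℕ} (hj : j < 12)
    (h₁ : breakpoint (36 + j + 12 * σ) ≤ n) (h₂ : n ≤ breakpoint (36 + j + 1 + 12 * σ)) :
    (18033 / 79202 : ℝ) * n ^ 2 ≤ edgeCount (labelGraph label) n := by
  set K := 36 + j
  set P := 5 ^ σ
  set A := blockSum pattern gap K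
  set B := lowerSum pattern gap K
  set t := n - breakpoint (K + 12 * σ)
  have hcount := blockSum_add_mul_le_edgeCount K σ n h₁ h₂
  have hsucc : breakpoint (K + 1) = breakpoint K + gap K :=
    (Nat.add_sub_of_le (breakpoint_strictMono.monotone K.le_succ)).symm
  have hn : n = breakpoint K * P + t := by
    rw [← breakpoint_add_mul]; omega
  have ht : t ≤ gap K * P := by
    rw [gap, Nat.sub_mul, ← breakpoint_add_mul, ← breakpoint_add_mul]; omega
  have hL : (18033 / 79202 : ℝ) * (breakpoint K : ℝ) ^ 2 ≤ A := by
    have : (18033 : ℝ) * (breakpoint K : ℝ) ^ 2 ≤ 79202 * A := by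
      exact_mod_cast density_at_block_start j hj
    linarith
  have hR : (18033 / 79202 : ℝ) * (breakpoint K + gap K : ℝ) ^ 2 ≤ A + B * gap K := by
    have hR₀ := density_at_block_end j hj
    rw [hsucc] at hR₀
    have : (18033 : ℝ) * (breakpoint K + gap K : ℝ) ^ 2 ≤ 79202 * (A + B * gap K) := by
      exact_mod_cast hR₀
    linarith
  have key := mul_sq_le_of_endpoints (c := 18033 / 79202) (m := breakpoint K * P)
    (D := gap K * P) (s := t) (A := A * P ^ 2) (B := B * P) (by norm_num) (by positivity)
    (by exact_mod_cast ht)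
    (by rw [mul_pow, ← mul_assoc]; exact mul_le_mul_of_nonneg_right hL (sq_nonneg _))
    (calc _ = (18033 / 79202 : ℝ) * (breakpoint K + gap K : ℝ) ^ 2 * (P : ℝ) ^ 2 := by ring
      _ ≤ (A + B * gap K) * (P : ℝ) ^ 2 := mul_le_mul_of_nonneg_right hR (sq_nonneg _)
      _ = _ := by ring)
  have hcount' : (A : ℝ) * P ^ 2 + t * (B * P) ≤ edgeCount (labelGraph label) n := by
    exact_mod_cast hcount
  rw [show (n : ℝ) = breakpoint K * P + t by exact_mod_cast hn]
  linarith

lemma mul_sq_le_edgeCount {n : ℕ} (hn : 2500 < n) :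
    (18033 / 79202 : ℝ) * n ^ 2 ≤ edgeCount (labelGraph label) n := by
  have h36 : breakpoint 36 < n := by rwa [show breakpoint 36 = 2500 by decide]
  obtain ⟨hκ, hlo, hhi⟩ := le_segIndex_and_mem_Ioc breakpoint_strictMono h36
  obtain ⟨j, σ, hj, hκ_eq⟩ : ∃ j σ, j < 12 ∧ segIndex breakpoint n = 36 + j + 12 * σ :=
    ⟨(segIndex breakpoint n - 36) % 12, (segIndex breakpoint n - 36) / 12,
      Nat.mod_lt _ (by norm_num), by omega⟩
  rw [hκ_eq] at hlo hhi
  exact mul_sq_le_edgeCount_of_mem_Icc hj hlo.le (by rwa [add_right_comm] at hhi)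

end I11Construction

theorem exists_I11_free_graph_with_large_liminf :
    ∃ G : SimpleGraph ℕ, ¬ HasIncPath G 11 ∧
      (18033 / 79202 : ℝ) ≤
        liminf (fun n : ℕ => (edgeCount G n : ℝ) / n ^ 2) atTop := by
  refine ⟨labelGraph I11Construction.label,
    not_hasIncPath_labelGraph fun _ => I11Construction.pattern_lt _,
    le_liminf_of_le isCoboundedUnder_ge_edgeCount_div_sq ?_⟩
  filter_upwards [eventually_gt_atTop 2500] with n hn
  rw [le_div_iff₀ (by positivity)]
  exact I11Construction.mul_sq_le_edgeCount hn
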